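/- Let M ≥ 2, let K and M′ := ξ·v₀v₀ᴴ − D be invertible M×M complex matrices (ξ ∈ ℝ, D an M×M complex matrix), and let v₀ ∈ ℂ^M be nonzero. Let v₂, …, v_M ∈ ℂ^M be linearly independent vectors each orthogonal to v₀ (v₀ᴴv_i = 0 for i = 2, …, M), so that they form a basis of the orthogonal complement of span{v₀} in ℂ^M. Define w_i := K·M′⁻¹·K·v_i for i = 2, …, M, and let W be the M×M matrix with columns v₀, w₂, …, w_M. Then v₀ᴴ K⁻¹ M′ K⁻¹ v₀ = 0 if and only if det(W) = 0. (Theorem 4: the implicit equation determining the Lagrange parameter p is equivalent to a polynomial determinant equation.) -/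
import Mathlib


open Complex Finset Matrix

/-- Theorem 4: with `M = n + 1 ≥ 2`, `M′ = ξ·v₀v₀ᴴ − D` and `K` invertible,
`v₀ ≠ 0`, and `v₂, …, v_M` a linearly independent family orthogonal to `v₀`
(hence a basis of the orthogonal complement of `span{v₀}`), setting
`w_i = K·M′⁻¹·K·v_i` and `W = [v₀, w₂, …, w_M]`, the implicit equation
`v₀ᴴK⁻¹M′K⁻¹v₀ = 0` holds iff `det W = 0`. -/
theorem stmt_14 {n : ℕ} (hn : 1 ≤ n) (ξ : ℝ)
    (K D M' : Matrix (Fin (n + 1)) (Fin (n + 1)) ℂ)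
    (v₀ : Fin (n + 1) → ℂ) (hv₀ : v₀ ≠ 0)
    (hM' : M' = (ξ : ℂ) • vecMulVec v₀ (star v₀) - D)
    (hKinv : IsUnit K.det) (hM'inv : IsUnit M'.det)
    (u : Fin n → Fin (n + 1) → ℂ) (hli : LinearIndependent ℂ u)
    (horth : ∀ i, star v₀ ⬝ᵥ u i = 0)
    (w : Fin n → Fin (n + 1) → ℂ)
    (hw : ∀ i, w i = K *ᵥ (M'⁻¹ *ᵥ (K *ᵥ u i)))
    (W : Matrix (Fin (n + 1)) (Fin (n + 1)) ℂ)
    (hW : ∀ i j, W i j = Fin.cases (v₀ i) (fun k => w k i) j) :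
    star v₀ ⬝ᵥ ((K⁻¹ * M' * K⁻¹) *ᵥ v₀) = 0 ↔ W.det = 0 := by
  classical
  set A : Matrix (Fin (n+1)) (Fin (n+1)) ℂ := K * M'⁻¹ * K with hA
  have hAdet : IsUnit A.det := by
    rw [hA, Matrix.det_mul, Matrix.det_mul]
    exact (hKinv.mul (Matrix.isUnit_nonsing_inv_det M' hM'inv)).mul hKinv
  have hAinv : A⁻¹ = K⁻¹ * M' * K⁻¹ := by
    rw [hA, Matrix.mul_inv_rev, Matrix.mul_inv_rev,
      Matrix.nonsing_inv_nonsing_inv M' hM'inv, Matrix.mul_assoc]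
  set x : Fin (n+1) → ℂ := A⁻¹ *ᵥ v₀ with hx
  have hAx : A *ᵥ x = v₀ := by
    rw [hx, Matrix.mulVec_mulVec, Matrix.mul_nonsing_inv A hAdet, Matrix.one_mulVec]
  have hwA : ∀ i, w i = A *ᵥ u i := by
    intro i
    rw [hw i, hA, Matrix.mulVec_mulVec, Matrix.mulVec_mulVec]
  have hAw : ∀ i, A⁻¹ *ᵥ w i = u i := by
    intro i
    rw [hwA i, Matrix.mulVec_mulVec, Matrix.nonsing_inv_mul A hAdet, Matrix.one_mulVec]
  -- the linear functional y ↦ v₀ᴴ y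
  set f : (Fin (n+1) → ℂ) →ₗ[ℂ] ℂ :=
    { toFun := fun y => star v₀ ⬝ᵥ y
      map_add' := fun a b => dotProduct_add _ _ _
      map_smul' := fun r a => by simp [dotProduct_smul] } with hf
  have hfapp : ∀ y, f y = star v₀ ⬝ᵥ y := fun y => rfl
  have hfv₀ : f v₀ ≠ 0 := by
    rw [hfapp]
    open scoped ComplexOrder in
    exact fun h => hv₀ (dotProduct_star_self_eq_zero.mp h)
  have hrange : LinearMap.range f = ⊤ := by
    rw [LinearMap.range_eq_top]
    intro z
    refine ⟨(z / f v₀) • v₀, ?_⟩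
    rw [_root_.map_smul, smul_eq_mul, div_mul_cancel₀ _ hfv₀]
  have hker : Module.finrank ℂ (LinearMap.ker f) = n := by
    have h1 := LinearMap.finrank_range_add_finrank_ker f
    rw [hrange, finrank_top, Module.finrank_self, Module.finrank_fin_fun] at h1
    omega
  have hspan : Submodule.span ℂ (Set.range u) = LinearMap.ker f := by
    apply Submodule.eq_of_le_of_finrank_le
    · rw [Submodule.span_le]
      rintro _ ⟨i, rfl⟩
      exact LinearMap.mem_ker.mpr (horth i)
    · rw [hker, finrank_span_eq_card hli, Fintype.card_fin]
  have hLHS : star v₀ ⬝ᵥ ((K⁻¹ * M' * K⁻¹) *ᵥ v₀) = f x := by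
    rw [hfapp, hx, hAinv]
  have hWmul : ∀ c : Fin (n+1) → ℂ, W *ᵥ c = c 0 • v₀ + ∑ k, c k.succ • w k := by
    intro c
    funext i
    simp only [Matrix.mulVec, dotProduct, hW, Pi.add_apply, Pi.smul_apply,
      Finset.sum_apply, smul_eq_mul]
    rw [Fin.sum_univ_succ]
    simp [mul_comm]
  rw [hLHS, ← Matrix.exists_mulVec_eq_zero_iff (M := W)]
  constructor
  · intro hfx
    have hxmem : x ∈ Submodule.span ℂ (Set.range u) := by
      rw [hspan]; exact LinearMap.mem_ker.mpr hfx
    obtain ⟨d, hd⟩ := (Submodule.mem_span_range_iff_exists_fun ℂ).mp hxmem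
    have hveq : ∑ k, d k • w k = v₀ := by
      rw [← hAx]
      conv_rhs => rw [← hd]
      rw [show A *ᵥ (∑ k, d k • u k) = A.mulVecLin (∑ k, d k • u k) from rfl, map_sum]
      refine Finset.sum_congr rfl fun k _ => ?_
      rw [_root_.map_smul, Matrix.mulVecLin_apply, hwA k]
    refine ⟨Fin.cons 1 (fun k => -d k), ?_, ?_⟩
    · intro h
      have := congrFun h 0
      simp at this
    · rw [hWmul]
      simp only [Fin.cons_zero, Fin.cons_succ, one_smul, neg_smul,
        Finset.sum_neg_distrib, hveq]
      exact add_neg_cancel v₀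
  · rintro ⟨c, hc0, hc⟩
    rw [hWmul] at hc
    have h2 : c 0 • x + ∑ k, c k.succ • u k = 0 := by
      have h := congrArg (fun y => A⁻¹.mulVecLin y) hc
      simpa only [map_add, _root_.map_smul, map_sum, map_zero, Matrix.mulVecLin_apply, hAw,
        ← hx] using h
    have h3 := congrArg f h2
    rw [map_add, _root_.map_smul, map_zero] at h3
    have hsz : f (∑ k : Fin n, c k.succ • u k) = 0 := by
      rw [map_sum]
      refine Finset.sum_eq_zero fun k _ => ?_
      rw [_root_.map_smul, hfapp, horth k, smul_zero]
    rw [hsz, add_zero, smul_eq_mul] at h3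
    rcases mul_eq_zero.mp h3 with h | h
    · exfalso
      apply hc0
      have hz : ∀ k : Fin n, c k.succ = 0 := by
        have hzero : ∑ k : Fin n, c k.succ • u k = 0 := by
          rw [h, zero_smul, zero_add] at h2
          exact h2
        exact fun k => Fintype.linearIndependent_iff.mp hli _ hzero k
      funext j
      refine Fin.cases ?_ ?_ j
      · exact h
      · exact hz
    · exact h
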